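/- Let Q ∈ {0,1}^{m×n} be a binary matrix, x ∈ [n] a column index, let L = [n]\{x}, and let R = {z ∈ [m] : Q_{z,x} = 0}. For a row j ∈ R, define H by setting entry (j,x) to 1 and keeping all other entries of Q. Then the following are equivalent: (1) the transversal matroids of Q and H coincide (same bases); (2) the transversal matroids of Q_{R,:} and H_{R,:} coincide; (3) mrank(Q_{R,:}) = mrank(H_{R,:}); (4) mrank(Q_{R\{j\}, L}) < mrank(Q_{R, L}), i.e., j is a coloop of the transversal matroid of Q_{R,L}. -/

import Mathlib

open Classical

/-- Independence in the transversal matroid of a binary matrix `Q` (rows as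
ground set): `Z` is matchable injectively into the columns via `1`-entries. -/
def TIndep {α β : Type*} (Q : α → β → Bool) (Z : Finset α) : Prop :=
  ∃ φ : α → β, Set.InjOn φ Z ∧ ∀ z ∈ Z, Q z (φ z) = true

/-- Bases of the transversal matroid of `Q` restricted to the row set `R`:
the maximal independent subsets of `R`. -/
def TBasesOn {α β : Type*} (Q : α → β → Bool) (R : Finset α) : Set (Finset α) :=
  {B | B ⊆ R ∧ TIndep Q B ∧ ∀ B' ⊆ R, TIndep Q B' → B ⊆ B' → B = B'}

/-- The matching rank of `Q` restricted to row set `R`: the maximum size of an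
independent (matchable) subset of `R`. -/
noncomputable def trankOn {α β : Type*} (Q : α → β → Bool) (R : Finset α) : ℕ :=
  sSup {k | ∃ Z ⊆ R, TIndep Q Z ∧ Z.card = k}

/-- Replace the column `x` of `Q` by the boolean column `d`. -/
def replaceCol {α β : Type*} [DecidableEq β] (Q : α → β → Bool) (x : β)
    (d : α → Bool) : α → β → Bool :=
  fun i j => if j = x then d i else Q i j

/-
Adding the edge `(j, x)` only creates new matchable row sets `Z` that use it: `j ∈ Z` and
`Z ∖ {j}` is matchable avoiding column `x`. If `j` is a coloop of the matroid of `Q_{R,L}`, such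
a `Z` is already matchable in `Q`: a Hall violator `S ⊆ Z` for `Q` has no neighbour in column `x`,
so `S ⊆ R`, and `S ∖ {j}` is independent in `Q_{R,L}`; a coloop lies in the closure of no set
avoiding it, so `S` is independent after all. Hence `Q` and `H` have the same independent sets
and everything agrees. If `j` is not a coloop, a maximum matchable subset of `R ∖ {j}` in
`Q_{R,L}` is a basis of `Q_{R,:}` which `H` extends by `j` (matched to `x`), so the bases on `R`
and the rank on `R` both change.
-/

section TransversalMatroid

open Finset

variable {α β : Type*}

section Indep

variable {Q Q' : α → β → Bool} {Z W : Finset α}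

theorem TIndep.mono (h : TIndep Q Z) (hWZ : W ⊆ Z) : TIndep Q W :=
  let ⟨φ, hinj, hφ⟩ := h
  ⟨φ, hinj.mono (coe_subset.2 hWZ), fun z hz => hφ z (hWZ hz)⟩

theorem TIndep.of_le (hQ : ∀ i c, Q i c = true → Q' i c = true) (h : TIndep Q Z) :
    TIndep Q' Z :=
  let ⟨φ, hinj, hφ⟩ := h
  ⟨φ, hinj, fun z hz => hQ _ _ (hφ z hz)⟩

theorem tindep_congr_rows (h : ∀ z ∈ Z, Q z = Q' z) : TIndep Q Z ↔ TIndep Q' Z := by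
  refine exists_congr fun φ => and_congr_right fun _ => ?_
  exact forall₂_congr fun z hz => by rw [h z hz]

theorem tindep_empty [Nonempty β] (Q : α → β → Bool) : TIndep Q ∅ :=
  ⟨fun _ => Classical.arbitrary β, by simp, by simp⟩

end Indep

section Hall

variable [Fintype β] [DecidableEq β] {Q : α → β → Bool} {S T Z W : Finset α}

def nbhd (Q : α → β → Bool) (S : Finset α) : Finset β :=
  S.biUnion fun z => univ.filter fun c => Q z c = true

@[simp]
theorem mem_nbhd {c : β} : c ∈ nbhd Q S ↔ ∃ z ∈ S, Q z c = true := by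
  simp [nbhd]

theorem nbhd_mono (h : S ⊆ T) : nbhd Q S ⊆ nbhd Q T :=
  biUnion_subset_biUnion_of_subset_left _ h

theorem nbhd_union [DecidableEq α] : nbhd Q (S ∪ T) = nbhd Q S ∪ nbhd Q T :=
  union_biUnion

theorem TIndep.card_le_card_nbhd (h : TIndep Q Z) (hSZ : S ⊆ Z) : #S ≤ #(nbhd Q S) := by
  obtain ⟨φ, hinj, hφ⟩ := h
  calc #S = #(S.image φ) := (card_image_of_injOn (hinj.mono (coe_subset.2 hSZ))).symm
    _ ≤ #(nbhd Q S) := card_le_card fun c hc => by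
      obtain ⟨z, hz, rfl⟩ := mem_image.1 hc
      exact mem_nbhd.2 ⟨z, hz, hφ z (hSZ hz)⟩

theorem tindep_iff_forall_card_le_card_nbhd [Nonempty β] :
    TIndep Q Z ↔ ∀ S ⊆ Z, #S ≤ #(nbhd Q S) := by
  refine ⟨fun h S hSZ => h.card_le_card_nbhd hSZ, fun h => ?_⟩
  have hall : ∀ s : Finset Z, #s ≤ #(s.biUnion fun z => univ.filter fun c => Q z c = true) := by
    intro s
    have hs : nbhd Q (s.map (Function.Embedding.subtype _)) =
        s.biUnion fun z => univ.filter fun c => Q z c = true := by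
      simp only [nbhd, map_eq_image, Function.Embedding.coe_subtype, image_biUnion]
    rw [← hs, ← card_map (Function.Embedding.subtype _)]
    exact h _ fun z hz => by
      obtain ⟨⟨z, hzZ⟩, -, rfl⟩ := mem_map.1 hz
      exact hzZ
  obtain ⟨f, hfinj, hf⟩ := (all_card_le_biUnion_card_iff_exists_injective _).1 hall
  refine ⟨fun z => if hz : z ∈ Z then f ⟨z, hz⟩ else Classical.arbitrary β, ?_, ?_⟩
  · intro z hz w hw hzw
    simp only [mem_coe] at hz hw
    simp only [dif_pos hz, dif_pos hw] at hzw
    exact congrArg Subtype.val (hfinj hzw)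
  · intro z hz
    simpa [dif_pos hz] using hf ⟨z, hz⟩

/-- Tight sets (`#N(T) ≤ #T`) inside an independent set are closed under union, by
submodularity of `#N`. -/
theorem TIndep.card_nbhd_union_le [DecidableEq α] (hZ : TIndep Q Z) (hSZ : S ⊆ Z)
    (hS : #(nbhd Q S) ≤ #S) (hT : #(nbhd Q T) ≤ #T) :
    #(nbhd Q (S ∪ T)) ≤ #(S ∪ T) := by
  have hinter : nbhd Q (S ∩ T) ⊆ nbhd Q S ∩ nbhd Q T :=
    subset_inter (nbhd_mono inter_subset_left) (nbhd_mono inter_subset_right)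
  have hhall : #(S ∩ T) ≤ #(nbhd Q (S ∩ T)) := hZ.card_le_card_nbhd (inter_subset_left.trans hSZ)
  have := card_le_card hinter
  have := card_union_add_card_inter (nbhd Q S) (nbhd Q T)
  have := card_union_add_card_inter S T
  rw [nbhd_union]
  omega

theorem TIndep.exists_tight_of_not_tindep_insert [Nonempty β] [DecidableEq α] {w : α}
    (hZ : TIndep Q Z) (hwZ : ¬TIndep Q (insert w Z)) :
    ∃ T ⊆ Z, #(nbhd Q T) ≤ #T ∧ nbhd Q {w} ⊆ nbhd Q T := by
  obtain ⟨S, hS, hSlt⟩ : ∃ S ⊆ insert w Z, #(nbhd Q S) < #S := by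
    simpa [tindep_iff_forall_card_le_card_nbhd] using hwZ
  have hTZ : S.erase w ⊆ Z := fun z hz => by
    obtain ⟨hzw, hzS⟩ := mem_erase.1 hz
    exact (mem_insert.1 (hS hzS)).resolve_left hzw
  have hwS : w ∈ S := by
    by_contra hwS
    have := hZ.card_le_card_nbhd (erase_eq_of_notMem hwS ▸ hTZ)
    omega
  have hsub : nbhd Q (S.erase w) ⊆ nbhd Q S := nbhd_mono (erase_subset w S)
  have hTcard : #(S.erase w) + 1 = #S := card_erase_add_one hwS
  have hhall := hZ.card_le_card_nbhd hTZ
  have heq : nbhd Q (S.erase w) = nbhd Q S :=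
    eq_of_subset_of_card_le hsub (by have := card_le_card hsub; omega)
  refine ⟨S.erase w, hTZ, by rw [heq]; omega, heq ▸ nbhd_mono (singleton_subset_iff.2 hwS)⟩

/-- Augmentation for transversal matroids. If no element of `W ∖ Z` can be added to `Z`, each
is covered by a tight subset of `Z`; their union `T` is tight, and `W ∖ (Z ∖ T)` then violates
Hall's condition. -/
theorem TIndep.exists_insert_of_card_lt [Nonempty β] [DecidableEq α] (hZ : TIndep Q Z)
    (hW : TIndep Q W) (hcard : #Z < #W) : ∃ w ∈ W, w ∉ Z ∧ TIndep Q (insert w Z) := by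
  by_contra! hcon
  have tight : ∀ w ∈ W \ Z, ∃ T ⊆ Z, #(nbhd Q T) ≤ #T ∧ nbhd Q {w} ⊆ nbhd Q T :=
    fun w hw => hZ.exists_tight_of_not_tindep_insert
      fun h => (hcon w (mem_sdiff.1 hw).1 (mem_sdiff.1 hw).2 h)
  choose! T hTZ hTtight hTcover using tight
  set U := (W \ Z).sup T
  obtain ⟨hUZ, hUtight⟩ : U ⊆ Z ∧ #(nbhd Q U) ≤ #U := by
    refine sup_induction (p := fun T => T ⊆ Z ∧ #(nbhd Q T) ≤ #T) (by simp [nbhd]) ?_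
      fun w hw => ⟨hTZ w hw, hTtight w hw⟩
    rintro A ⟨hAZ, hA⟩ B ⟨hBZ, hB⟩
    exact ⟨union_subset hAZ hBZ, hZ.card_nbhd_union_le hAZ hA hB⟩
  have hcover : nbhd Q (W \ (Z \ U)) ⊆ nbhd Q U := by
    intro c hc
    obtain ⟨w, hw, hwc⟩ := mem_nbhd.1 hc
    obtain ⟨hwW, hwZU⟩ := mem_sdiff.1 hw
    by_cases hwZ : w ∈ Z
    · exact mem_nbhd.2 ⟨w, by simpa [hwZ] using hwZU, hwc⟩
    · have hwWZ : w ∈ W \ Z := mem_sdiff.2 ⟨hwW, hwZ⟩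
      exact nbhd_mono (le_sup (f := T) hwWZ)
        (hTcover w hwWZ (mem_nbhd.2 ⟨w, mem_singleton_self w, hwc⟩))
  have hhall := hW.card_le_card_nbhd (sdiff_subset (s := W) (t := Z \ U))
  have := card_le_card hcover
  have := le_card_sdiff (Z \ U) W
  have := card_sdiff_of_subset hUZ
  have := card_le_card hUZ
  omega

theorem TIndep.exists_superset_subset_union [Nonempty β] [DecidableEq α] {C : Finset α}
    (hC : TIndep Q C) (hW : TIndep Q W) : ∃ C' ⊇ C, C' ⊆ C ∪ W ∧ TIndep Q C' ∧ #W ≤ #C' := by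
  by_cases hlt : #C < #W
  · obtain ⟨w, hwW, hwC, hins⟩ := hC.exists_insert_of_card_lt hW hlt
    obtain ⟨C', hCC', hC'W, hC', hcard⟩ := hins.exists_superset_subset_union hW
    refine ⟨C', (subset_insert w C).trans hCC', hC'W.trans ?_, hC', hcard⟩
    rw [insert_union]
    exact insert_subset (mem_union_right C hwW) subset_rfl
  · exact ⟨C, subset_rfl, subset_union_left, hC, by omega⟩
termination_by #W - #C
decreasing_by rw [card_insert_of_notMem hwC]; omega

end Hall

section Rank

variable {Q Q' : α → β → Bool} {R Z : Finset α}

theorem bddAbove_card_tindep (Q : α → β → Bool) (R : Finset α) :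
    BddAbove {k | ∃ Z ⊆ R, TIndep Q Z ∧ #Z = k} :=
  ⟨#R, by rintro k ⟨Z, hZR, -, rfl⟩; exact card_le_card hZR⟩

theorem exists_tindep_card_eq_trankOn [Nonempty β] (Q : α → β → Bool) (R : Finset α) :
    ∃ Z ⊆ R, TIndep Q Z ∧ #Z = trankOn Q R :=
  show trankOn Q R ∈ {k | ∃ Z ⊆ R, TIndep Q Z ∧ #Z = k} from
    Nat.sSup_mem ⟨0, ∅, empty_subset R, tindep_empty Q, rfl⟩ (bddAbove_card_tindep Q R)

theorem TIndep.card_le_trankOn (hZ : TIndep Q Z) (hZR : Z ⊆ R) : #Z ≤ trankOn Q R :=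
  le_csSup (bddAbove_card_tindep Q R) ⟨Z, hZR, hZ, rfl⟩

theorem trankOn_congr (h : ∀ Z ⊆ R, TIndep Q Z ↔ TIndep Q' Z) : trankOn Q R = trankOn Q' R := by
  unfold trankOn
  congr 1
  ext k
  exact exists_congr fun Z => ⟨fun ⟨hZR, hZ, hk⟩ => ⟨hZR, (h Z hZR).1 hZ, hk⟩,
    fun ⟨hZR, hZ, hk⟩ => ⟨hZR, (h Z hZR).2 hZ, hk⟩⟩

theorem TIndep.of_erase_of_trankOn_erase_lt [Fintype β] [DecidableEq β] [Nonempty β]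
    [DecidableEq α] {S : Finset α} {j : α} (hcoloop : trankOn Q (R.erase j) < trankOn Q R)
    (hSR : S ⊆ R) (hS : TIndep Q (S.erase j)) : TIndep Q S := by
  obtain ⟨M, hMR, hM, hMcard⟩ := exists_tindep_card_eq_trankOn Q R
  obtain ⟨C, hSC, hCM, hC, hcard⟩ := hS.exists_superset_subset_union hM
  by_cases hjC : j ∈ C
  · refine hC.mono fun z hz => ?_
    by_cases hzj : z = j
    · exact hzj ▸ hjC
    · exact hSC (mem_erase.2 ⟨hzj, hz⟩)
  · have hCR : C ⊆ R.erase j := fun z hz => by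
      refine mem_erase.2 ⟨fun hzj => hjC (hzj ▸ hz), ?_⟩
      rcases mem_union.1 (hCM hz) with h | h
      · exact hSR (mem_of_mem_erase h)
      · exact hMR h
    have := hC.card_le_trankOn hCR
    omega

end Rank

section Bases

variable {Q Q' : α → β → Bool} {R Z : Finset α}

theorem tBasesOn_congr (h : ∀ Z, TIndep Q Z ↔ TIndep Q' Z) (R : Finset α) :
    TBasesOn Q R = TBasesOn Q' R := by
  simp only [TBasesOn, h]

theorem TIndep.mem_tBasesOn_of_trankOn_le (hZ : TIndep Q Z) (hZR : Z ⊆ R)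
    (hcard : trankOn Q R ≤ #Z) : Z ∈ TBasesOn Q R :=
  ⟨hZR, hZ, fun _ hBR hB hZB =>
    eq_of_subset_of_card_le hZB ((hB.card_le_trankOn hBR).trans hcard)⟩

theorem TIndep.exists_mem_tBasesOn_superset (hZ : TIndep Q Z) (hZR : Z ⊆ R) :
    ∃ B ∈ TBasesOn Q R, Z ⊆ B := by
  obtain ⟨B, hB, hBmax⟩ := exists_max_image (R.powerset.filter fun Y => TIndep Q Y ∧ Z ⊆ Y)
    card ⟨Z, mem_filter.2 ⟨mem_powerset.2 hZR, hZ, subset_rfl⟩⟩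
  simp only [mem_filter, mem_powerset] at hB hBmax
  obtain ⟨hBR, hB, hZB⟩ := hB
  refine ⟨B, ⟨hBR, hB, fun B' hB'R hB' hBB' => ?_⟩, hZB⟩
  exact eq_of_subset_of_card_le hBB' (hBmax B' ⟨hB'R, hB', hZB.trans hBB'⟩)

theorem tindep_iff_of_tBasesOn_eq (h : TBasesOn Q R = TBasesOn Q' R) (hZR : Z ⊆ R) :
    TIndep Q Z ↔ TIndep Q' Z := by
  suffices ∀ {Q Q' : α → β → Bool}, TBasesOn Q R = TBasesOn Q' R → TIndep Q Z → TIndep Q' Z from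
    ⟨this h, this h.symm⟩
  intro Q Q' h hZ
  obtain ⟨B, hB, hZB⟩ := hZ.exists_mem_tBasesOn_superset hZR
  exact (h ▸ hB : B ∈ TBasesOn Q' R).2.1.mono hZB

end Bases

section EdgeFlip

variable {Q : α → β → Bool} {j : α} {x : β} {Z D : Finset α}

def addEdge [DecidableEq α] [DecidableEq β] (Q : α → β → Bool) (i : α) (c : β) :
    α → β → Bool :=
  fun i' c' => if i' = i ∧ c' = c then true else Q i' c'

/-- The paper's column restriction `Q_{:,L}`, `L = [n] ∖ {x}`, modelled by zeroing column `x`. -/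
def eraseCol [DecidableEq β] (Q : α → β → Bool) (x : β) : α → β → Bool :=
  replaceCol Q x fun _ => false

def zeroRows [Fintype α] (Q : α → β → Bool) (x : β) : Finset α :=
  univ.filter fun z => Q z x = false

theorem addEdge_of_eq_true [DecidableEq α] [DecidableEq β] {i : α} {c : β}
    (h : Q i c = true) : addEdge Q j x i c = true := by
  simp [addEdge, h]

theorem eq_true_of_eraseCol [DecidableEq β] {i : α} {c : β} (h : eraseCol Q x i c = true) :
    Q i c = true := by
  simp only [eraseCol, replaceCol] at h
  split_ifs at h
  exact h

theorem eraseCol_apply_of_eq_false [DecidableEq β] {i : α} (h : Q i x = false) :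
    eraseCol Q x i = Q i := by
  funext c
  by_cases hc : c = x
  · simp [eraseCol, replaceCol, hc, h]
  · simp [eraseCol, replaceCol, hc]

theorem tindep_eraseCol_iff [Fintype α] [DecidableEq β] (hZ : Z ⊆ zeroRows Q x) :
    TIndep (eraseCol Q x) Z ↔ TIndep Q Z :=
  tindep_congr_rows fun _ hz => eraseCol_apply_of_eq_false (mem_filter.1 (hZ hz)).2

theorem trankOn_eraseCol_zeroRows [Fintype α] [DecidableEq β] :
    trankOn (eraseCol Q x) (zeroRows Q x) = trankOn Q (zeroRows Q x) :=
  trankOn_congr fun _ hZ => tindep_eraseCol_iff hZ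

theorem TIndep.insert_addEdge [DecidableEq α] [DecidableEq β] (hD : TIndep (eraseCol Q x) D)
    (hjD : j ∉ D) : TIndep (addEdge Q j x) (insert j D) := by
  obtain ⟨ψ, hinj, hψ⟩ := hD
  have hψx : ∀ z ∈ D, ψ z ≠ x := fun z hz hzx => by
    simpa [eraseCol, replaceCol, hzx] using hψ z hz
  have hupdate : Set.EqOn ψ (Function.update ψ j x) D := fun z hz => by
    rw [Function.update_of_ne (ne_of_mem_of_not_mem hz hjD)]
  refine ⟨Function.update ψ j x, ?_, fun z hz => ?_⟩
  · rw [coe_insert, Set.injOn_insert (by simpa using hjD), ← hupdate.image_eq]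
    refine ⟨hinj.congr hupdate, fun ⟨z, hz, hzx⟩ => hψx z hz (by simpa using hzx)⟩
  · rcases mem_insert.1 hz with rfl | hz
    · simp [addEdge]
    · rw [← hupdate hz]
      simpa [addEdge, ne_of_mem_of_not_mem hz hjD] using eq_true_of_eraseCol (hψ z hz)

theorem TIndep.of_addEdge [DecidableEq α] [DecidableEq β] (hZ : TIndep (addEdge Q j x) Z) :
    TIndep Q Z ∨ TIndep (eraseCol Q x) (Z.erase j) := by
  obtain ⟨φ, hinj, hφ⟩ := hZ
  by_cases hjx : j ∈ Z ∧ φ j = x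
  · refine Or.inr ⟨φ, hinj.mono (coe_subset.2 (erase_subset j Z)), fun z hz => ?_⟩
    obtain ⟨hzj, hzZ⟩ := mem_erase.1 hz
    have hφz : φ z ≠ x := fun h => hzj (hinj hzZ hjx.1 (h.trans hjx.2.symm))
    simpa [addEdge, eraseCol, replaceCol, hzj, hφz] using hφ z hzZ
  · refine Or.inl ⟨φ, hinj, fun z hz => ?_⟩
    have hzx : ¬(z = j ∧ φ z = x) := by
      rintro ⟨rfl, h⟩
      exact hjx ⟨hz, h⟩
    simpa [addEdge, hzx] using hφ z hz

theorem nbhd_addEdge_subset [Fintype β] [DecidableEq α] [DecidableEq β] (S : Finset α) :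
    nbhd (addEdge Q j x) S ⊆ insert x (nbhd Q S) := by
  intro c hc
  obtain ⟨z, hz, hzc⟩ := mem_nbhd.1 hc
  by_cases hcx : c = x
  · rw [hcx]
    exact mem_insert_self x _
  · exact mem_insert_of_mem (mem_nbhd.2 ⟨z, hz, by simpa [addEdge, hcx] using hzc⟩)

theorem TIndep.of_addEdge_of_trankOn_erase_lt [Fintype α] [Fintype β] [DecidableEq α]
    [DecidableEq β] [Nonempty β]
    (hcoloop : trankOn (eraseCol Q x) ((zeroRows Q x).erase j) <
      trankOn (eraseCol Q x) (zeroRows Q x))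
    (hZ : TIndep (addEdge Q j x) Z) : TIndep Q Z := by
  by_contra hQ
  have hD : TIndep (eraseCol Q x) (Z.erase j) := hZ.of_addEdge.resolve_left hQ
  obtain ⟨S, hSZ, hSlt⟩ : ∃ S ⊆ Z, #(nbhd Q S) < #S := by
    simpa [tindep_iff_forall_card_le_card_nbhd] using hQ
  have hxS : x ∉ nbhd Q S := fun hx => by
    have := hZ.card_le_card_nbhd hSZ
    have := card_le_card ((nbhd_addEdge_subset (j := j) S).trans (insert_subset hx subset_rfl))
    omega
  have hSR : S ⊆ zeroRows Q x := fun z hz =>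
    mem_filter.2 ⟨mem_univ z, by simpa using fun h => hxS (mem_nbhd.2 ⟨z, hz, h⟩)⟩
  have hS : TIndep Q S := (tindep_eraseCol_iff hSR).1
    ((hD.mono (erase_subset_erase j hSZ)).of_erase_of_trankOn_erase_lt hcoloop hSR)
  exact absurd (hS.card_le_card_nbhd subset_rfl) (by omega)

theorem trankOn_erase_lt_of_trankOn_eq [Fintype α] [DecidableEq α] [DecidableEq β]
    [Nonempty β] (hj : Q j x = false)
    (h : trankOn Q (zeroRows Q x) = trankOn (addEdge Q j x) (zeroRows Q x)) :
    trankOn (eraseCol Q x) ((zeroRows Q x).erase j) < trankOn (eraseCol Q x) (zeroRows Q x) := by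
  obtain ⟨D, hDR, hD, hDcard⟩ :=
    exists_tindep_card_eq_trankOn (eraseCol Q x) ((zeroRows Q x).erase j)
  have hjD : j ∉ D := fun h => notMem_erase j _ (hDR h)
  have hjR : j ∈ zeroRows Q x := mem_filter.2 ⟨mem_univ j, hj⟩
  have := (hD.insert_addEdge hjD).card_le_trankOn (insert_subset hjR (hDR.trans (erase_subset _ _)))
  rw [card_insert_of_notMem hjD] at this
  rw [trankOn_eraseCol_zeroRows]
  omega

theorem trankOn_erase_lt_of_tBasesOn_eq [Fintype α] [DecidableEq α] [DecidableEq β]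
    [Nonempty β] (hj : Q j x = false)
    (h : TBasesOn Q (zeroRows Q x) = TBasesOn (addEdge Q j x) (zeroRows Q x)) :
    trankOn (eraseCol Q x) ((zeroRows Q x).erase j) < trankOn (eraseCol Q x) (zeroRows Q x) := by
  by_contra! hle
  obtain ⟨M, hMR, hM, hMcard⟩ :=
    exists_tindep_card_eq_trankOn (eraseCol Q x) ((zeroRows Q x).erase j)
  have hjM : j ∉ M := fun h => notMem_erase j _ (hMR h)
  have hjR : j ∈ zeroRows Q x := mem_filter.2 ⟨mem_univ j, hj⟩
  have hMR' : M ⊆ zeroRows Q x := hMR.trans (erase_subset _ _)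
  have hMQ : TIndep Q M := hM.of_le fun _ _ => eq_true_of_eraseCol
  have hbasis : M ∈ TBasesOn (addEdge Q j x) (zeroRows Q x) :=
    h ▸ hMQ.mem_tBasesOn_of_trankOn_le hMR' (by rw [← trankOn_eraseCol_zeroRows]; omega)
  have := hbasis.2.2 (insert j M) (insert_subset hjR hMR') (hM.insert_addEdge hjM)
    (subset_insert j M)
  exact hjM (this ▸ mem_insert_self j M)

end EdgeFlip

end TransversalMatroid

/-- **When an edge in a bipartite graph can be added without changing the
transversal matroid.** With `R` the rows having a `0` in column `x`, `j ∈ R`,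
and `H` equal to `Q` with entry `(j, x)` set to `1`, the following are
equivalent: (1) `Q` and `H` have the same bases; (2) their matroids restricted
to rows `R` have the same bases; (3) `mrank(Q_{R,:}) = mrank(H_{R,:})`;
(4) `mrank(Q_{R∖{j}, L}) < mrank(Q_{R, L})`, i.e. `j` is a coloop of the
matroid of `Q_{R,L}`, where `L = [n] ∖ {x}`. -/
theorem edge_flip_tfae {α β : Type*} [Fintype α] [Fintype β]
    [DecidableEq α] [DecidableEq β] (Q : α → β → Bool) (x : β) (j : α)
    (hj : Q j x = false) :
    let H : α → β → Bool := fun i j' => if i = j ∧ j' = x then true else Q i j'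
    let QL : α → β → Bool := replaceCol Q x fun _ => false
    let R : Finset α := Finset.univ.filter fun z => Q z x = false
    ((TBasesOn Q Finset.univ = TBasesOn H Finset.univ ↔
        TBasesOn Q R = TBasesOn H R) ∧
      (TBasesOn Q R = TBasesOn H R ↔ trankOn Q R = trankOn H R) ∧
      (trankOn Q R = trankOn H R ↔ trankOn QL (R.erase j) < trankOn QL R)) := by
  intro H QL R
  have : Nonempty β := ⟨x⟩
  have indep_eq (h : trankOn QL (R.erase j) < trankOn QL R) (Z : Finset α) :
      TIndep Q Z ↔ TIndep H Z :=
    ⟨TIndep.of_le fun _ _ => addEdge_of_eq_true, TIndep.of_addEdge_of_trankOn_erase_lt h⟩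
  have coloop_of_bases : TBasesOn Q R = TBasesOn H R → trankOn QL (R.erase j) < trankOn QL R :=
    trankOn_erase_lt_of_tBasesOn_eq hj
  have coloop_of_rank : trankOn Q R = trankOn H R → trankOn QL (R.erase j) < trankOn QL R :=
    trankOn_erase_lt_of_trankOn_eq hj
  exact ⟨⟨fun h => tBasesOn_congr (fun Z => tindep_iff_of_tBasesOn_eq h (Finset.subset_univ Z)) R,
      fun h => tBasesOn_congr (indep_eq (coloop_of_bases h)) Finset.univ⟩,
    ⟨fun h => trankOn_congr fun Z _ => indep_eq (coloop_of_bases h) Z,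
      fun h => tBasesOn_congr (indep_eq (coloop_of_rank h)) R⟩,
    ⟨coloop_of_rank, fun h => trankOn_congr fun Z _ => indep_eq h Z⟩⟩
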